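/- arXiv:2203.02254 — 5 statements merged into one kernel-verified Lean document; each statement's English description precedes it below -/
import Mathlib

section
/- For every complex number z with |z| < 1, the integral of 1/|1 − z·conj(η)| over the unit circle with respect to normalized arc length equals the series Σ_{j=0}^{∞} ( (1/2)_j )² / (j!)² · |z|^{2j}, where (1/2)_j = Γ(1/2 + j)/Γ(1/2) is the Pochhammer symbol. -/
/-!
By the binomial series, `(1 - w)^(-1/2) = ∑ cₙ wⁿ` for `|w| < 1` with `cₙ = (1/2)ₙ / n!`, so
`1 / |1 - w| = |∑ cₙ wⁿ|²`. Since `|1 - z η̄| = |1 - z̄ η|`, take `w = z̄ η` and integrate over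
`η = e^{iθ}`: Parseval's identity for the absolutely convergent series `∑ cₙ z̄ⁿ ηⁿ` (orthogonality
of the `ηⁿ`, termwise integration by dominated convergence) gives `∑ cₙ² |z|^{2n}`.
-/

open Complex MeasureTheory

open scoped Nat ComplexConjugate Real

theorem Complex.choose_add_sub_one_eq_Gamma_div {a : ℂ} (ha : ∀ k : ℕ, a ≠ -k) (n : ℕ) :
    Ring.choose (a + n - 1) n = Gamma (a + n) / Gamma a / n ! := by
  rw [← Ring.multichoose_eq, Gamma_add_nat_div_Gamma_eq a ha,
    ← Polynomial.ascPochhammer_smeval_eq_eval, ← Ring.factorial_nsmul_multichoose_eq_ascPochhammer,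
    nsmul_eq_mul]
  field_simp [Nat.factorial_ne_zero]

theorem Complex.hasSum_choose_mul_pow (a : ℂ) {x : ℂ} (hx : ‖x‖ < 1) :
    HasSum (fun n : ℕ => Ring.choose (a + n - 1) n * x ^ n) (1 / (1 - x) ^ a) := by
  have := (one_div_one_sub_cpow_hasFPowerSeriesOnBall_zero a).hasSum (y := x)
    (by simpa [← ofReal_norm] using hx)
  simpa [FormalMultilinearSeries.ofScalars_apply_eq, mul_comm] using this

theorem Complex.summable_norm_choose_mul_pow (a : ℂ) {x : ℂ} (hx : ‖x‖ < 1) :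
    Summable fun n : ℕ => ‖Ring.choose (a + n - 1) n * x ^ n‖ := by
  have hp := one_div_one_sub_cpow_hasFPowerSeriesOnBall_zero a
  have hx' : (‖x‖₊ : ENNReal) < _ := lt_of_lt_of_le (by exact_mod_cast hx) hp.r_le
  simpa [FormalMultilinearSeries.ofScalars_norm] using
    FormalMultilinearSeries.summable_norm_mul_pow _ hx'

theorem Complex.norm_one_div_cpow_half_sq (y : ℂ) : ‖1 / y ^ (1 / 2 : ℂ)‖ ^ 2 = 1 / ‖y‖ := by
  have hsqrt : ‖y ^ (1 / 2 : ℂ)‖ = √‖y‖ := by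
    rw [Real.sqrt_eq_rpow, ← norm_cpow_real]
    norm_num
  rw [norm_div, norm_one, hsqrt, div_pow, Real.sq_sqrt (norm_nonneg y), one_pow]

theorem integral_conj_exp_pow_mul_exp_pow (j k : ℕ) :
    ∫ θ in (0:ℝ)..2 * π, conj (exp (θ * I)) ^ j * exp (θ * I) ^ k =
      if j = k then (2 * π : ℂ) else 0 := by
  have hexp : ∀ θ : ℝ,
      conj (exp (θ * I)) ^ j * exp (θ * I) ^ k = exp (((k : ℂ) - j) * I * θ) := by
    intro θ
    rw [← exp_conj, map_mul, conj_ofReal, conj_I, ← exp_nat_mul, ← exp_nat_mul, ← exp_add]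
    ring_nf
  simp_rw [hexp]
  split_ifs with hjk
  · simp [hjk]
  · have hc : ((k : ℂ) - j) * I ≠ 0 :=
      mul_ne_zero (sub_ne_zero.mpr (by exact_mod_cast Ne.symm hjk)) I_ne_zero
    have hperiod : ((k : ℂ) - j) * I * ↑(2 * π) = ((k - j : ℤ) : ℂ) * (2 * π * I) := by
      push_cast
      ring
    rw [integral_exp_mul_complex hc, hperiod, exp_int_mul_two_pi_mul_I]
    simp

theorem intervalIntegral.hasSum_integral_of_summable_bound {ι E : Type*} [Countable ι]
    [NormedAddCommGroup E] [NormedSpace ℝ E] [CompleteSpace E] {F : ι → ℝ → E} {C : ι → ℝ}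
    {a b : ℝ} (hF : ∀ i, Continuous (F i)) (hFC : ∀ i t, ‖F i t‖ ≤ C i) (hC : Summable C) :
    HasSum (fun i => ∫ t in a..b, F i t) (∫ t in a..b, ∑' i, F i t) :=
  hasSum_integral_of_dominated_convergence (fun i _ => C i)
    (fun i => (hF i).aestronglyMeasurable) (fun i => ae_of_all _ fun t _ => hFC i t)
    (ae_of_all _ fun _ _ => hC) intervalIntegrable_const
    (ae_of_all _ fun t _ => (hC.of_norm_bounded (hFC · t)).hasSum)

theorem integral_conj_exp_pow_mul_tsum {a : ℕ → ℂ} (ha : Summable fun n => ‖a n‖) (j : ℕ) :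
    ∫ θ in (0:ℝ)..2 * π, conj (exp (θ * I)) ^ j * ∑' n, a n * exp (θ * I) ^ n = 2 * π * a j := by
  simp_rw [← tsum_mul_left]
  rw [← (intervalIntegral.hasSum_integral_of_summable_bound (fun n => by fun_prop)
    (fun n θ => ?_) ha).tsum_eq]
  · simp_rw [mul_left_comm _ (a _), intervalIntegral.integral_const_mul,
      integral_conj_exp_pow_mul_exp_pow]
    rw [tsum_eq_single j (fun n hn => by simp [Ne.symm hn])]
    simp [mul_comm]
  · simp [norm_exp_ofReal_mul_I]

theorem continuous_tsum_mul_exp_pow {a : ℕ → ℂ} (ha : Summable fun n => ‖a n‖) :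
    Continuous fun θ : ℝ => ∑' n, a n * exp (θ * I) ^ n :=
  continuous_tsum (fun n => by fun_prop) ha fun n θ => by simp [norm_exp_ofReal_mul_I]

theorem norm_tsum_mul_exp_pow_le {a : ℕ → ℂ} (ha : Summable fun n => ‖a n‖) (θ : ℝ) :
    ‖∑' n, a n * exp (θ * I) ^ n‖ ≤ ∑' n, ‖a n‖ :=
  (norm_tsum_le_tsum_norm (ha.congr fun n => by simp [norm_exp_ofReal_mul_I])).trans_eq
    (tsum_congr fun n => by simp [norm_exp_ofReal_mul_I])

theorem integral_norm_tsum_mul_exp_pow_sq {a : ℕ → ℂ} (ha : Summable fun n => ‖a n‖) :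
    ∫ θ in (0:ℝ)..2 * π, ‖∑' n, a n * exp (θ * I) ^ n‖ ^ 2 = 2 * π * ∑' n, ‖a n‖ ^ 2 := by
  have hS : ∀ θ : ℝ, ((‖∑' n, a n * exp (θ * I) ^ n‖ ^ 2 : ℝ) : ℂ) =
      ∑' j, conj (a j) * (conj (exp (θ * I)) ^ j * ∑' n, a n * exp (θ * I) ^ n) := by
    intro θ
    simp_rw [← mul_assoc, tsum_mul_right, ← map_pow, ← map_mul, ← conj_tsum, conj_mul']
    norm_cast
  apply ofReal_injective
  rw [← intervalIntegral.integral_ofReal]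
  simp_rw [hS]
  rw [← (intervalIntegral.hasSum_integral_of_summable_bound (C := fun j => ‖a j‖ * ∑' n, ‖a n‖)
    (fun j => by have := continuous_tsum_mul_exp_pow ha; fun_prop) (fun j θ => ?_)
    (ha.mul_right _)).tsum_eq]
  · simp_rw [intervalIntegral.integral_const_mul, integral_conj_exp_pow_mul_tsum ha,
      mul_left_comm _ (2 * π : ℂ), conj_mul']
    push_cast [ofReal_tsum]
    rw [tsum_mul_left]
  · simp only [norm_mul, RCLike.norm_conj, norm_pow, norm_exp_ofReal_mul_I, one_pow, one_mul]
    exact mul_le_mul_of_nonneg_left (norm_tsum_mul_exp_pow_le ha θ) (norm_nonneg _)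

theorem circle_integral_inv_norm_eq_series (z : ℂ) (hz : ‖z‖ < 1) :
    (2 * Real.pi)⁻¹ *
        ∫ θ in (0:ℝ)..(2 * Real.pi),
          1 / ‖1 - z * (starRingEnd ℂ) (Complex.exp (θ * Complex.I))‖ =
      ∑' j : ℕ,
        (Real.Gamma (1 / 2 + j) / Real.Gamma (1 / 2)) ^ 2 / ((j.factorial : ℝ)) ^ 2 *
          ‖z‖ ^ (2 * j) := by
  have hhalf : ∀ k : ℕ, (1 / 2 : ℂ) ≠ -k := fun k h => by
    have hre := congrArg re h
    norm_num at hre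
    linarith [k.cast_nonneg (α := ℝ)]
  have hc : ∀ n : ℕ, Ring.choose ((1 / 2 : ℂ) + n - 1) n =
      ((Real.Gamma (1 / 2 + n) / Real.Gamma (1 / 2) / n ! : ℝ) : ℂ) := fun n => by
    rw [choose_add_sub_one_eq_Gamma_div hhalf n]
    norm_num [← Gamma_ofReal]
  have hx : ∀ θ : ℝ, ‖conj z * exp (θ * I)‖ < 1 := fun θ => by
    rwa [norm_mul, norm_exp_ofReal_mul_I, mul_one, RCLike.norm_conj]
  have hsum : Summable fun n : ℕ => ‖Ring.choose ((1 / 2 : ℂ) + n - 1) n * conj z ^ n‖ := by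
    simpa using summable_norm_choose_mul_pow (1 / 2) (hx 0)
  have hpt : ∀ θ : ℝ, 1 / ‖1 - z * conj (exp (θ * I))‖ =
      ‖∑' n : ℕ, Ring.choose ((1 / 2 : ℂ) + n - 1) n * conj z ^ n * exp (θ * I) ^ n‖ ^ 2 := by
    intro θ
    rw [← RCLike.norm_conj, map_sub, map_one, map_mul, conj_conj,
      ← norm_one_div_cpow_half_sq, ← (hasSum_choose_mul_pow (1 / 2) (hx θ)).tsum_eq]
    simp_rw [mul_assoc, ← mul_pow]
  rw [intervalIntegral.integral_congr fun θ _ => hpt θ, integral_norm_tsum_mul_exp_pow_sq hsum,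
    ← mul_assoc, inv_mul_cancel₀ (by positivity), one_mul]
  refine tsum_congr fun n => ?_
  rw [norm_mul, norm_pow, RCLike.norm_conj, hc, norm_real, Real.norm_of_nonneg (by positivity)]
  ring
end

section
/- For every complex number z with |z| < 1, the integral ∫_T 1/|1 − z·conj(η)| ds(η) over the unit circle (with normalized arc length ds of total mass 1) is at most 1 + (1/π) · log(1/(1 − |z|²)). -/
/-!
With `w = conj z · η`, the binomial series `(1 - w)^(-1/2) = ∑ (1/2)_n / n! · wⁿ` gives
`1 / |1 - w| = |∑ (1/2)_n / n! · (conj z)ⁿ ηⁿ|²`, so by Parseval the normalised integral equals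
`∑ ((1/2)_n / n!)² |z|²ⁿ`. Log-convexity of `Γ` gives `Γ(n + 1/2) ≤ √n Γ(n)`, i.e.
`((1/2)_n / n!)² ≤ 1 / (π n)` for `n ≥ 1`, and `∑ |z|²ⁿ / n = log (1 / (1 - |z|²))`.
-/

open Complex MeasureTheory
open scoped Real ComplexConjugate

theorem Real.Gamma_add_nat_eq_ascPochhammer_mul {r : ℝ} (hr : 0 < r) (n : ℕ) :
    Real.Gamma (r + n) = (ascPochhammer ℝ n).eval r * Real.Gamma r := by
  induction n with
  | zero => simp
  | succ n ih =>
    rw [Nat.cast_succ, ← add_assoc, Real.Gamma_add_one (by positivity), ih,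
      ascPochhammer_succ_eval]
    ring

theorem Real.Gamma_add_half_le_sqrt_mul_Gamma {x : ℝ} (hx : 0 < x) :
    Real.Gamma (x + 1 / 2) ≤ √x * Real.Gamma x := by
  have hG := Real.Gamma_pos_of_pos hx
  have h := Real.Gamma_mul_add_mul_le_rpow_Gamma_mul_rpow_Gamma hx (by positivity : 0 < x + 1)
    (by norm_num : (0:ℝ) < 1 / 2) (by norm_num : (0:ℝ) < 1 / 2) (by norm_num)
  rwa [show 1 / 2 * x + 1 / 2 * (x + 1) = x + 1 / 2 by ring, Real.Gamma_add_one hx.ne',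
    ← Real.mul_rpow hG.le (by positivity), ← Real.sqrt_eq_rpow,
    show Real.Gamma x * (x * Real.Gamma x) = x * Real.Gamma x ^ 2 by ring,
    Real.sqrt_mul hx.le, Real.sqrt_sq hG.le] at h

theorem Ring.multichoose_eq_Gamma_div {r : ℝ} (hr : 0 < r) (n : ℕ) :
    Ring.multichoose r n = Real.Gamma (r + n) / (Real.Gamma r * n.factorial) := by
  have h := Ring.factorial_nsmul_multichoose_eq_ascPochhammer r n
  rw [Polynomial.ascPochhammer_smeval_eq_eval, nsmul_eq_mul] at h
  rw [Real.Gamma_add_nat_eq_ascPochhammer_mul hr, ← h]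
  have := (Real.Gamma_pos_of_pos hr).ne'
  field_simp

theorem multichoose_half_eq (n : ℕ) :
    Ring.multichoose (1 / 2 : ℝ) n = Real.Gamma (n + 1 / 2) / (√π * n.factorial) := by
  rw [Ring.multichoose_eq_Gamma_div (by norm_num), Real.Gamma_one_half_eq, add_comm]

theorem multichoose_half_nonneg (n : ℕ) : 0 ≤ Ring.multichoose (1 / 2 : ℝ) n := by
  rw [multichoose_half_eq]
  have := Real.Gamma_pos_of_pos (by positivity : (0:ℝ) < n + 1 / 2)
  positivity

theorem multichoose_half_sq_le {n : ℕ} (hn : n ≠ 0) :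
    Ring.multichoose (1 / 2 : ℝ) n ^ 2 ≤ 1 / (π * n) := by
  have hn' : (0 : ℝ) < n := by positivity
  have hG := Real.Gamma_pos_of_pos hn'
  have hle : Ring.multichoose (1 / 2 : ℝ) n ≤ 1 / (√π * √n) := by
    rw [multichoose_half_eq, ← Real.Gamma_nat_eq_factorial, Real.Gamma_add_one hn'.ne',
      div_le_div_iff₀ (by positivity) (by positivity)]
    calc Real.Gamma (n + 1 / 2) * (√π * √n) ≤ √n * Real.Gamma n * (√π * √n) := by
          gcongr; exact Real.Gamma_add_half_le_sqrt_mul_Gamma hn'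
      _ = 1 * (√π * (n * Real.Gamma n)) := by
          linear_combination (√π * Real.Gamma n) * Real.mul_self_sqrt hn'.le
  calc Ring.multichoose (1 / 2 : ℝ) n ^ 2 ≤ (1 / (√π * √n)) ^ 2 :=
        pow_le_pow_left₀ (multichoose_half_nonneg n) hle 2
    _ = 1 / (π * n) := by
        rw [div_pow, mul_pow, Real.sq_sqrt Real.pi_pos.le, Real.sq_sqrt hn'.le, one_pow]

theorem multichoose_half_le_one (n : ℕ) : Ring.multichoose (1 / 2 : ℝ) n ≤ 1 := by
  rcases eq_or_ne n 0 with rfl | hn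
  · exact (Ring.multichoose_zero_right _).le
  refine (pow_le_one_iff_of_nonneg (multichoose_half_nonneg n) two_ne_zero).mp
    ((multichoose_half_sq_le hn).trans ?_)
  rw [div_le_one (by positivity)]
  nlinarith [Real.pi_gt_three, (Nat.one_le_cast (α := ℝ)).mpr (Nat.one_le_iff_ne_zero.mpr hn)]

theorem hasSum_multichoose_mul_pow (r : ℝ) {w : ℂ} (hw : ‖w‖ < 1) :
    HasSum (fun n => ((Ring.multichoose r n : ℝ) : ℂ) * w ^ n) (1 / (1 - w) ^ (r : ℂ)) := by
  have h := (Complex.one_div_one_sub_cpow_hasFPowerSeriesOnBall_zero r).hasSum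
    (y := w) (by simpa [← ofReal_norm] using hw)
  simp only [FormalMultilinearSeries.ofScalars_apply_eq, smul_eq_mul, zero_add] at h
  refine h.congr_fun fun n => ?_
  rw [Ring.multichoose_eq, Complex.ofReal_choose]
  push_cast
  -- the two sides differ only in the instance paths to `Ring.choose` on `ℂ`
  rfl

theorem norm_tsum_multichoose_half_mul_pow_sq {w : ℂ} (hw : ‖w‖ < 1) :
    ‖∑' n, ((Ring.multichoose (1 / 2 : ℝ) n : ℝ) : ℂ) * w ^ n‖ ^ 2 = 1 / ‖1 - w‖ := by
  rw [(hasSum_multichoose_mul_pow _ hw).tsum_eq, norm_div, norm_one, norm_cpow_real, div_pow,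
    one_pow, ← Real.sqrt_eq_rpow, Real.sq_sqrt (norm_nonneg _)]

theorem summable_norm_multichoose_half_mul_pow {w : ℂ} (hw : ‖w‖ < 1) :
    Summable fun n => ‖((Ring.multichoose (1 / 2 : ℝ) n : ℝ) : ℂ) * w ^ n‖ := by
  refine .of_nonneg_of_le (fun _ => norm_nonneg _) (fun n => ?_)
    (summable_geometric_of_lt_one (norm_nonneg w) hw)
  rw [norm_mul, norm_pow, norm_real, Real.norm_of_nonneg (multichoose_half_nonneg n)]
  exact mul_le_of_le_one_left (by positivity) (multichoose_half_le_one n)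

theorem integral_exp_mul_I_pow_mul_conj_pow (m n : ℕ) :
    ∫ θ in (0:ℝ)..2 * π, exp (θ * I) ^ m * conj (exp (θ * I)) ^ n =
      if m = n then ((2 * π : ℝ) : ℂ) else 0 := by
  have hexp : ∀ θ : ℝ, exp (θ * I) ^ m * conj (exp (θ * I)) ^ n
      = exp (((m : ℤ) - n : ℤ) * I * θ) := by
    intro θ
    rw [← exp_conj, ← exp_nat_mul, ← exp_nat_mul, ← exp_add]
    congr 1
    simp only [map_mul, conj_ofReal, conj_I]
    push_cast
    ring
  simp_rw [hexp]
  split_ifs with hmn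
  · subst hmn
    simp
  · have hc : (((m : ℤ) - n : ℤ) : ℂ) * I ≠ 0 := by
      refine mul_ne_zero ?_ I_ne_zero
      exact_mod_cast sub_ne_zero.mpr (Int.ofNat_inj.not.mpr hmn)
    rw [integral_exp_mul_complex hc]
    have : (((m : ℤ) - n : ℤ) : ℂ) * I * ((2 * π : ℝ) : ℂ) = ((m : ℤ) - n : ℤ) * (2 * π * I) := by
      push_cast; ring
    rw [this, exp_int_mul_two_pi_mul_I]
    simp

theorem hasSum_mul_conj_of_summable_norm {f : ℕ → ℂ} (hf : Summable (‖f ·‖)) :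
    HasSum (fun p : ℕ × ℕ => f p.1 * conj (f p.2)) ((‖∑' n, f n‖ ^ 2 : ℝ) : ℂ) := by
  have hg : Summable fun n => ‖conj (f n)‖ := by simpa only [RCLike.norm_conj] using hf
  rw [← normSq_eq_norm_sq, ← mul_conj, conj_tsum, tsum_mul_tsum_of_summable_norm hf hg]
  exact (summable_mul_of_summable_norm hf hg).hasSum

theorem integral_norm_tsum_mul_exp_mul_I_pow_sq {a : ℕ → ℂ} (ha : Summable (‖a ·‖)) :
    ∫ θ in (0:ℝ)..2 * π, ‖∑' n, a n * exp (θ * I) ^ n‖ ^ 2 = 2 * π * ∑' n, ‖a n‖ ^ 2 := by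
  have hnorm : ∀ θ : ℝ, (fun n => ‖a n * exp (θ * I) ^ n‖) = (‖a ·‖) := by
    intro θ; ext n; rw [norm_mul, norm_pow, norm_exp_ofReal_mul_I, one_pow, mul_one]
  have hsum : HasSum (fun p : ℕ × ℕ => ∫ θ in (0:ℝ)..2 * π,
        a p.1 * exp (θ * I) ^ p.1 * conj (a p.2 * exp (θ * I) ^ p.2))
      (∫ θ in (0:ℝ)..2 * π, ((‖∑' n, a n * exp (θ * I) ^ n‖ ^ 2 : ℝ) : ℂ)) := by
    refine intervalIntegral.hasSum_integral_of_dominated_convergence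
      (fun p _ => ‖a p.1‖ * ‖a p.2‖) (fun p => by fun_prop) (fun p => ?_) ?_
      intervalIntegrable_const ?_
    · refine .of_forall fun θ _ => le_of_eq ?_
      simp only [norm_mul, RCLike.norm_conj, norm_pow, norm_exp_ofReal_mul_I, one_pow, mul_one]
    · exact .of_forall fun _ _ =>
        ha.mul_of_nonneg ha (fun _ => norm_nonneg _) (fun _ => norm_nonneg _)
    · exact .of_forall fun θ _ =>
        hasSum_mul_conj_of_summable_norm (f := fun n => a n * exp (θ * I) ^ n)
          (by rw [hnorm θ]; exact ha)
  have hdiag : ∀ p : ℕ × ℕ, ∫ θ in (0:ℝ)..2 * π,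
        a p.1 * exp (θ * I) ^ p.1 * conj (a p.2 * exp (θ * I) ^ p.2) =
      if p.1 = p.2 then ((2 * π * ‖a p.1‖ ^ 2 : ℝ) : ℂ) else 0 := by
    rintro ⟨m, n⟩
    have : ∀ θ : ℝ, a m * exp (θ * I) ^ m * conj (a n * exp (θ * I) ^ n) =
        a m * conj (a n) * (exp (θ * I) ^ m * conj (exp (θ * I)) ^ n) := by
      intro θ; simp only [map_mul, map_pow]; ring
    simp only [this, intervalIntegral.integral_const_mul, integral_exp_mul_I_pow_mul_conj_pow]
    split_ifs with h
    · subst h; rw [mul_conj, normSq_eq_norm_sq]; push_cast; ring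
    · simp
  simp only [hdiag, intervalIntegral.integral_ofReal] at hsum
  have hinj : Function.Injective fun n : ℕ => (n, n) := fun m n h => congrArg Prod.fst h
  rw [← hinj.hasSum_iff, Function.comp_def] at hsum
  · simp only [if_true] at hsum
    rw [← tsum_mul_left, (Complex.hasSum_ofReal.mp hsum).tsum_eq]
  · rintro ⟨m, n⟩ hmn
    exact if_neg fun (h : m = n) => hmn ⟨m, by rw [h]⟩

theorem tsum_multichoose_half_sq_mul_pow_le {q : ℝ} (hq0 : 0 ≤ q) (hq1 : q < 1) :
    ∑' n, Ring.multichoose (1 / 2 : ℝ) n ^ 2 * q ^ n ≤ 1 + 1 / π * Real.log (1 / (1 - q)) := by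
  have hsum : Summable fun n => Ring.multichoose (1 / 2 : ℝ) n ^ 2 * q ^ n := by
    refine .of_nonneg_of_le (fun n => by positivity) (fun n => ?_)
      (summable_geometric_of_lt_one hq0 hq1)
    refine mul_le_of_le_one_left (by positivity) ?_
    exact pow_le_one₀ (multichoose_half_nonneg n) (multichoose_half_le_one n)
  have hlog := (Real.hasSum_pow_div_log_of_abs_lt_one (abs_lt.mpr ⟨by linarith, hq1⟩)).mul_left
    (1 / π)
  have hle : ∀ n : ℕ, Ring.multichoose (1 / 2 : ℝ) (n + 1) ^ 2 * q ^ (n + 1) ≤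
      1 / π * (q ^ (n + 1) / (n + 1)) := by
    intro n
    calc Ring.multichoose (1 / 2 : ℝ) (n + 1) ^ 2 * q ^ (n + 1)
        ≤ 1 / (π * (n + 1 : ℕ)) * q ^ (n + 1) := by
          gcongr; exact multichoose_half_sq_le n.succ_ne_zero
      _ = 1 / π * (q ^ (n + 1) / (n + 1)) := by push_cast; field_simp
  rw [hsum.tsum_eq_zero_add, Ring.multichoose_zero_right, one_pow, pow_zero, mul_one,
    one_div (1 - q), Real.log_inv, ← hlog.tsum_eq]
  exact (add_le_add_iff_left 1).mpr
    ((hsum.comp_injective (add_left_injective 1)).tsum_le_tsum hle hlog.summable)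

theorem one_div_norm_one_sub_mul_conj_eq {z η : ℂ} (hz : ‖z‖ < 1) (hη : ‖η‖ = 1) :
    1 / ‖1 - z * conj η‖ =
      ‖∑' n, ((Ring.multichoose (1 / 2 : ℝ) n : ℝ) * conj z ^ n) * η ^ n‖ ^ 2 := by
  have hw : ‖conj z * η‖ < 1 := by rwa [norm_mul, RCLike.norm_conj, hη, mul_one]
  have hconj : ‖1 - z * conj η‖ = ‖1 - conj z * η‖ := by
    rw [← RCLike.norm_conj, map_sub, map_one, map_mul, conj_conj]
  simp only [hconj, ← norm_tsum_multichoose_half_mul_pow_sq hw, mul_pow, mul_assoc]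

theorem circle_integral_inv_norm_le (z : ℂ) (hz : ‖z‖ < 1) :
    (2 * Real.pi)⁻¹ *
        ∫ θ in (0:ℝ)..(2 * Real.pi),
          1 / ‖1 - z * (starRingEnd ℂ) (Complex.exp (θ * Complex.I))‖ ≤
      1 + (1 / Real.pi) * Real.log (1 / (1 - ‖z‖ ^ 2)) := by
  have hconj : ‖conj z‖ < 1 := by rwa [RCLike.norm_conj]
  have hcoeff : ∀ n, ‖((Ring.multichoose (1 / 2 : ℝ) n : ℝ) : ℂ) * conj z ^ n‖ ^ 2 =
      Ring.multichoose (1 / 2 : ℝ) n ^ 2 * (‖z‖ ^ 2) ^ n := by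
    intro n
    rw [norm_mul, norm_pow, RCLike.norm_conj, norm_real,
      Real.norm_of_nonneg (multichoose_half_nonneg n)]
    ring
  calc (2 * π)⁻¹ * ∫ θ in (0:ℝ)..2 * π, 1 / ‖1 - z * conj (exp (θ * I))‖
      = (2 * π)⁻¹ * ∫ θ in (0:ℝ)..2 * π,
          ‖∑' n, ((Ring.multichoose (1 / 2 : ℝ) n : ℝ) * conj z ^ n) * exp (θ * I) ^ n‖ ^ 2 := by
        simp only [one_div_norm_one_sub_mul_conj_eq hz (norm_exp_ofReal_mul_I _)]
    _ = ∑' n, Ring.multichoose (1 / 2 : ℝ) n ^ 2 * (‖z‖ ^ 2) ^ n := by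
        rw [integral_norm_tsum_mul_exp_mul_I_pow_sq (summable_norm_multichoose_half_mul_pow hconj),
          inv_mul_cancel_left₀ (by positivity)]
        simp only [hcoeff]
    _ ≤ 1 + 1 / π * Real.log (1 / (1 - ‖z‖ ^ 2)) :=
        tsum_multichoose_half_sq_mul_pow_le (by positivity)
          (pow_lt_one₀ (norm_nonneg z) hz two_ne_zero)
end

section
/- Let f be a bounded holomorphic function on the open unit disk and let k ≥ 0 be an integer. Then for every z in the unit disk, the difference between f(z) and its k-th Taylor polynomial P_k f(z) = Σ_{j=0}^{k} f̂(j) z^j satisfies |f(z) − P_k f(z)| ≤ |z|^{k+1} · (1 + (1/π) log(1/(1 − |z|²))) · sup_{|w|<1} |f(w)|. -/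
open Complex

/-! Expanding `(w - z)⁻¹ = ∑_{j ≤ k} z ^ j / w ^ (j + 1) + (z / w) ^ (k + 1) (w - z)⁻¹` in the
Cauchy formula on `|w| = ρ < 1` writes the remainder as a circle integral of norm at most
`(2π)⁻¹ (|z| / ρ) ^ (k + 1) M ρ ∫ dθ / |ρ e^{iθ} - z|`. With `a = |z| / ρ` this last integral is
`ρ⁻¹ ∫ (1 - 2a cos θ + a²)^{-1/2} dθ`; the `a`-derivative of the integrand integrates over a
period to at most `4a / (1 - a²)`, so integrating in `a` bounds it by `2π + 2 log (1 / (1 - a²))`.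
Finally let `ρ → 1`. -/

open Set MeasureTheory intervalIntegral Metric Filter
open scoped Real

theorem HasDerivAt.inv_sqrt {f : ℝ → ℝ} {f' x : ℝ} (hf : HasDerivAt f f' x) (hx : 0 < f x) :
    HasDerivAt (fun y => (√(f y))⁻¹) (-f' / (2 * (f x * √(f x)))) x := by
  refine ((hf.sqrt hx.ne').inv (Real.sqrt_pos.2 hx).ne').congr_deriv ?_
  have := Real.sqrt_pos.2 hx
  field_simp
  rw [Real.sq_sqrt hx.le]

namespace intervalIntegral

theorem integral_le_sub_of_hasDerivAt_of_le {g g' φ : ℝ → ℝ} {a b : ℝ} (hab : a ≤ b)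
    (hg : ∀ x ∈ Icc a b, HasDerivAt g (g' x) x) (hφ : IntegrableOn φ (Icc a b))
    (hle : ∀ x ∈ Ioo a b, φ x ≤ g' x) : ∫ x in a..b, φ x ≤ g b - g a :=
  integral_le_sub_of_hasDeriv_right_of_le hab
    (fun x hx => (hg x hx).continuousAt.continuousWithinAt)
    (fun x hx => (hg x (Ioo_subset_Icc_self hx)).hasDerivWithinAt) hφ hle

variable {E : Type*} [NormedAddCommGroup E] [NormedSpace ℝ E]

theorem integral_integral_swap_of_continuousOn [CompleteSpace E] {f : ℝ → ℝ → E} {a b c d : ℝ}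
    (hab : a ≤ b) (hcd : c ≤ d) (hf : ContinuousOn (Function.uncurry f) (Icc a b ×ˢ Icc c d)) :
    ∫ x in a..b, ∫ y in c..d, f x y = ∫ y in c..d, ∫ x in a..b, f x y := by
  simp only [integral_of_le hab, integral_of_le hcd]
  apply integral_integral_swap
  rw [Measure.prod_restrict, ← Measure.volume_eq_prod]
  exact (hf.integrableOn_compact (isCompact_Icc.prod isCompact_Icc)).mono_set
    (prod_mono Ioc_subset_Icc_self Ioc_subset_Icc_self)

theorem continuousOn_integral_of_continuousOn_prod {f : ℝ → ℝ → E} {a b c d : ℝ}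
    (hab : a ≤ b) (hcd : c ≤ d) (hf : ContinuousOn (Function.uncurry f) (Icc a b ×ˢ Icc c d)) :
    ContinuousOn (fun y => ∫ x in a..b, f x y) (Icc c d) := by
  set g : ℝ → ℝ → E := fun y x => f (projIcc a b hab x) (projIcc c d hcd y)
  have hg : Continuous (Function.uncurry g) :=
    hf.comp_continuous
      (f := fun p : ℝ × ℝ => ((projIcc a b hab p.2 : ℝ), (projIcc c d hcd p.1 : ℝ)))
      (by fun_prop) fun p => ⟨Subtype.prop _, Subtype.prop _⟩
  refine (continuous_parametric_intervalIntegral_of_continuous' hg a b).continuousOn.congr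
    fun y hy => integral_congr fun x hx => ?_
  rw [uIcc_of_le hab] at hx
  simp [g, projIcc_of_mem _ hx, projIcc_of_mem _ hy]

end intervalIntegral

theorem inv_sub_eq_sum_add {K : Type*} [Field K] {w z : K} (hw : w ≠ 0) (hwz : w ≠ z) (k : ℕ) :
    (w - z)⁻¹ =
      ∑ j ∈ Finset.range (k + 1), z ^ j / w ^ (j + 1) + (z / w) ^ (k + 1) * (w - z)⁻¹ := by
  have hterm : ∀ j : ℕ, z ^ j / w ^ (j + 1) * (w - z) = (z / w) ^ j - (z / w) ^ (j + 1) := by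
    intro j
    rw [div_pow, div_pow]
    field_simp
    ring
  have htele : (∑ j ∈ Finset.range (k + 1), z ^ j / w ^ (j + 1)) * (w - z) =
      1 - (z / w) ^ (k + 1) := by
    rw [Finset.sum_mul, Finset.sum_congr rfl fun j _ => hterm j, Finset.sum_range_sub', pow_zero]
  calc (w - z)⁻¹
      = ((∑ j ∈ Finset.range (k + 1), z ^ j / w ^ (j + 1)) * (w - z) + (z / w) ^ (k + 1)) *
          (w - z)⁻¹ := by rw [htele, sub_add_cancel, one_mul]
    _ = _ := by rw [add_mul, mul_inv_cancel_right₀ (sub_ne_zero.2 hwz)]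

namespace circleIntegral

variable {E : Type*} [NormedAddCommGroup E] [NormedSpace ℂ E]

theorem norm_integral_le_of_norm_le {f : ℂ → E} {c : ℂ} {R : ℝ} {B : ℝ → ℝ} (hR : 0 ≤ R)
    (hB : IntervalIntegrable B volume 0 (2 * π)) (hf : ∀ θ, ‖f (circleMap c R θ)‖ ≤ B θ) :
    ‖∮ z in C(c, R), f z‖ ≤ R * ∫ θ in (0)..(2 * π), B θ := by
  rw [← intervalIntegral.integral_const_mul]
  refine intervalIntegral.norm_integral_le_of_norm_le Real.two_pi_pos.le
    (ae_of_all _ fun θ _ => ?_) (hB.const_mul R)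
  rw [norm_smul, deriv_circleMap, norm_mul, norm_I, mul_one, norm_circleMap_zero,
    abs_of_nonneg hR]
  exact mul_le_mul_of_nonneg_left (hf θ) hR

end circleIntegral

namespace Real

/-- `circleDistSq s θ = ‖exp (θ * I) - s‖ ^ 2`. -/
noncomputable def circleDistSq (s θ : ℝ) : ℝ := 1 - 2 * s * cos θ + s ^ 2

@[fun_prop]
theorem _root_.Continuous.circleDistSq {α : Type*} [TopologicalSpace α] {f g : α → ℝ}
    (hf : Continuous f) (hg : Continuous g) :
    Continuous fun x => circleDistSq (f x) (g x) := by
  unfold Real.circleDistSq; fun_prop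

theorem circleDistSq_eq (s θ : ℝ) : circleDistSq s θ = (cos θ - s) ^ 2 + sin θ ^ 2 := by
  rw [circleDistSq]; linear_combination -(sin_sq_add_cos_sq θ)

theorem circleDistSq_nonneg (s θ : ℝ) : 0 ≤ circleDistSq s θ := by
  rw [circleDistSq_eq]; positivity

theorem circleDistSq_pos {s : ℝ} (hs : |s| < 1) (θ : ℝ) : 0 < circleDistSq s θ := by
  rw [abs_lt] at hs
  rw [circleDistSq]
  rcases le_or_gt 0 s with h | h
  · nlinarith [cos_le_one θ, mul_pos (sub_pos.2 hs.2) (sub_pos.2 hs.2)]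
  · nlinarith [neg_one_le_cos θ, mul_pos (sub_pos.2 hs.2) (neg_lt_iff_pos_add.1 hs.1)]

theorem abs_sin_div_sqrt_circleDistSq_le_one (s θ : ℝ) : |sin θ / √(circleDistSq s θ)| ≤ 1 := by
  rw [abs_div, abs_of_nonneg (sqrt_nonneg _)]
  refine div_le_one_of_le₀ ?_ (sqrt_nonneg _)
  rw [← sqrt_sq_eq_abs, circleDistSq_eq]
  exact sqrt_le_sqrt (le_add_of_nonneg_left (sq_nonneg _))

theorem abs_cos_sub_le_one_sub_mul_cos {s : ℝ} (hs : |s| ≤ 1) (θ : ℝ) :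
    |cos θ - s| ≤ 1 - s * cos θ := by
  have hs2 : s ^ 2 ≤ 1 := (sq_le_one_iff_abs_le_one s).2 hs
  have hc2 := cos_sq_le_one θ
  -- `(1 - s cos θ)² - (cos θ - s)² = (1 - s²) (1 - cos² θ)`
  exact abs_le_of_sq_le_sq (by nlinarith [mul_nonneg (sub_nonneg.2 hs2) (sub_nonneg.2 hc2)])
    (by nlinarith [sq_nonneg (s - cos θ)])

theorem hasDerivAt_inv_sqrt_circleDistSq {s : ℝ} (hs : |s| < 1) (θ : ℝ) :
    HasDerivAt (fun s => (√(circleDistSq s θ))⁻¹)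
      ((cos θ - s) / (circleDistSq s θ * √(circleDistSq s θ))) s := by
  have hd : HasDerivAt (fun s => circleDistSq s θ) (2 * s - 2 * cos θ) s := by
    have := ((((hasDerivAt_id' s).const_mul 2).mul_const (cos θ)).const_sub 1).add
      (hasDerivAt_pow 2 s)
    exact this.congr_deriv (by ring)
  refine (hd.inv_sqrt (circleDistSq_pos hs θ)).congr_deriv ?_
  ring

theorem hasDerivAt_sin_div_sqrt_circleDistSq {s : ℝ} (hs : |s| < 1) (θ : ℝ) :
    HasDerivAt (fun θ => sin θ / √(circleDistSq s θ))
      ((1 - s * cos θ) * (cos θ - s) / (circleDistSq s θ * √(circleDistSq s θ))) θ := by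
  have hpos := circleDistSq_pos hs θ
  have hd : HasDerivAt (fun θ => circleDistSq s θ) (2 * s * sin θ) θ := by
    have := (((hasDerivAt_cos θ).const_mul (2 * s)).const_sub 1).add_const (s ^ 2)
    exact this.congr_deriv (by ring)
  have := (hasDerivAt_sin θ).mul (hd.inv_sqrt hpos)
  refine this.congr_deriv ?_
  field_simp
  rw [sin_sq, circleDistSq]
  ring

section
variable {s : ℝ}

theorem continuous_div_circleDistSq_mul_sqrt (hs : |s| < 1) {g : ℝ → ℝ} (hg : Continuous g) :
    Continuous fun θ => g θ / (circleDistSq s θ * √(circleDistSq s θ)) :=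
  hg.div (by fun_prop) fun θ => by have := circleDistSq_pos hs θ; positivity

theorem sq_cos_sub_div_le_of_le (hs : |s| < 1) {θ : ℝ} (h : s ≤ cos θ) :
    (cos θ - s) ^ 2 / (circleDistSq s θ * √(circleDistSq s θ)) ≤
      (1 - s * cos θ) * (cos θ - s) / (circleDistSq s θ * √(circleDistSq s θ)) := by
  have := circleDistSq_pos hs θ
  gcongr
  rw [sq]
  exact mul_le_mul_of_nonneg_right
    ((le_abs_self _).trans (abs_cos_sub_le_one_sub_mul_cos hs.le θ)) (sub_nonneg.2 h)

theorem sq_cos_sub_div_le_neg_of_le (hs : |s| < 1) {θ : ℝ} (h : cos θ ≤ s) :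
    (cos θ - s) ^ 2 / (circleDistSq s θ * √(circleDistSq s θ)) ≤
      -((1 - s * cos θ) * (cos θ - s) / (circleDistSq s θ * √(circleDistSq s θ))) := by
  have := circleDistSq_pos hs θ
  rw [← neg_div, ← mul_neg, neg_sub, ← neg_sub, neg_sq]
  gcongr
  rw [sq]
  exact mul_le_mul_of_nonneg_right ((le_abs_self _).trans
    ((abs_sub_comm _ _).trans_le (abs_cos_sub_le_one_sub_mul_cos hs.le θ))) (sub_nonneg.2 h)

/-- The integrand is dominated by `|Q'|` for `Q θ = sin θ / √(circleDistSq s θ)`, and `Q` is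
monotone on the three arcs cut out by `cos θ = s`, so the integral is at most its total
variation `4`. -/
theorem integral_sq_cos_sub_div_le_four (hs : |s| < 1) :
    ∫ θ in (0)..(2 * π), (cos θ - s) ^ 2 / (circleDistSq s θ * √(circleDistSq s θ)) ≤ 4 := by
  set Q : ℝ → ℝ := fun θ => sin θ / √(circleDistSq s θ)
  set E : ℝ → ℝ := fun θ => (cos θ - s) ^ 2 / (circleDistSq s θ * √(circleDistSq s θ))
  have hQ := hasDerivAt_sin_div_sqrt_circleDistSq hs
  have hE : Continuous E := continuous_div_circleDistSq_mul_sqrt hs (by fun_prop)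
  have hs' := abs_lt.1 hs
  set θ₀ := arccos s
  have hcosθ₀ : cos θ₀ = s := cos_arccos (by linarith) (by linarith)
  have hθ₀ : 0 ≤ θ₀ := arccos_nonneg s
  have hθ₀π : θ₀ ≤ π := arccos_le_pi s
  have first_arc : ∫ θ in (0)..θ₀, E θ ≤ Q θ₀ - Q 0 :=
    integral_le_sub_of_hasDerivAt_of_le hθ₀ (fun θ _ => hQ θ) hE.integrableOn_Icc fun θ hθ =>
      sq_cos_sub_div_le_of_le hs (hcosθ₀ ▸ cos_le_cos_of_nonneg_of_le_pi hθ.1.le hθ₀π hθ.2.le)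
  have middle_arc : ∫ θ in θ₀..(2 * π - θ₀), E θ ≤ -Q (2 * π - θ₀) - -Q θ₀ := by
    refine integral_le_sub_of_hasDerivAt_of_le (by linarith) (fun θ _ => (hQ θ).neg)
      hE.integrableOn_Icc fun θ hθ => sq_cos_sub_div_le_neg_of_le hs ?_
    rcases le_or_gt θ π with h | h
    · exact hcosθ₀ ▸ cos_le_cos_of_nonneg_of_le_pi hθ₀ h hθ.1.le
    · rw [← cos_two_pi_sub, ← hcosθ₀]
      exact cos_le_cos_of_nonneg_of_le_pi hθ₀ (by linarith) (by linarith [hθ.2])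
  have last_arc : ∫ θ in (2 * π - θ₀)..(2 * π), E θ ≤ Q (2 * π) - Q (2 * π - θ₀) := by
    refine integral_le_sub_of_hasDerivAt_of_le (by linarith) (fun θ _ => hQ θ)
      hE.integrableOn_Icc fun θ hθ => sq_cos_sub_div_le_of_le hs ?_
    rw [← cos_two_pi_sub, ← hcosθ₀]
    exact cos_le_cos_of_nonneg_of_le_pi (by linarith [hθ.2]) hθ₀π (by linarith [hθ.1])
  rw [← integral_add_adjacent_intervals (hE.intervalIntegrable 0 θ₀) (hE.intervalIntegrable _ _),
    ← integral_add_adjacent_intervals (hE.intervalIntegrable θ₀ _) (hE.intervalIntegrable _ _)]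
  have hQ₁ := abs_le.1 (abs_sin_div_sqrt_circleDistSq_le_one s θ₀)
  have hQ₂ := abs_le.1 (abs_sin_div_sqrt_circleDistSq_le_one s (2 * π - θ₀))
  simp only [Q, sin_zero, sin_two_pi, zero_div] at first_arc last_arc
  linarith

theorem integral_cos_sub_div_le (hs0 : 0 ≤ s) (hs1 : s < 1) :
    ∫ θ in (0)..(2 * π), (cos θ - s) / (circleDistSq s θ * √(circleDistSq s θ)) ≤
      4 * s / (1 - s ^ 2) := by
  have hs : |s| < 1 := abs_lt.2 ⟨by linarith, hs1⟩
  have h1s : 0 < 1 - s ^ 2 := by nlinarith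
  have hQ'c := continuous_div_circleDistSq_mul_sqrt hs
    (g := fun θ => (1 - s * cos θ) * (cos θ - s)) (by fun_prop)
  have hEc := continuous_div_circleDistSq_mul_sqrt hs (g := fun θ => (cos θ - s) ^ 2) (by fun_prop)
  have hQ' : ∫ θ in (0)..(2 * π),
      (1 - s * cos θ) * (cos θ - s) / (circleDistSq s θ * √(circleDistSq s θ)) = 0 := by
    rw [integral_eq_sub_of_hasDerivAt (fun θ _ => hasDerivAt_sin_div_sqrt_circleDistSq hs θ)
      (hQ'c.intervalIntegrable _ _)]
    simp
  have hsplit : ∀ θ, (cos θ - s) / (circleDistSq s θ * √(circleDistSq s θ)) =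
      ((1 - s * cos θ) * (cos θ - s) / (circleDistSq s θ * √(circleDistSq s θ)) +
        s * ((cos θ - s) ^ 2 / (circleDistSq s θ * √(circleDistSq s θ)))) / (1 - s ^ 2) := by
    intro θ
    have := circleDistSq_pos hs θ
    field_simp
    ring
  simp_rw [hsplit]
  rw [intervalIntegral.integral_div, integral_add (hQ'c.intervalIntegrable _ _)
    ((hEc.intervalIntegrable _ _).const_mul s), intervalIntegral.integral_const_mul, hQ', zero_add]
  gcongr ?_ / _
  linarith [mul_le_mul_of_nonneg_left (integral_sq_cos_sub_div_le_four hs) hs0]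

end

theorem hasDerivAt_neg_two_mul_log_one_sub_sq {s : ℝ} (hs : s ^ 2 ≠ 1) :
    HasDerivAt (fun s => -2 * log (1 - s ^ 2)) (4 * s / (1 - s ^ 2)) s := by
  have hne : 1 - s ^ 2 ≠ 0 := sub_ne_zero.2 hs.symm
  refine ((((hasDerivAt_pow 2 s).const_sub 1).log hne).const_mul (-2)).congr_deriv ?_
  field_simp
  ring

theorem integral_cos_sub_div_eq_inv_sqrt_sub_one {a : ℝ} (ha0 : 0 ≤ a) (ha1 : a < 1) (θ : ℝ) :
    ∫ s in (0)..a, (cos θ - s) / (circleDistSq s θ * √(circleDistSq s θ)) =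
      (√(circleDistSq a θ))⁻¹ - 1 := by
  have hs : ∀ s ∈ uIcc 0 a, |s| < 1 := fun s hs => by
    rw [uIcc_of_le ha0] at hs
    exact abs_lt.2 ⟨by linarith [hs.1], hs.2.trans_lt ha1⟩
  rw [integral_eq_sub_of_hasDerivAt (fun s hs' => hasDerivAt_inv_sqrt_circleDistSq (hs s hs') θ)]
  · simp [circleDistSq]
  · refine ContinuousOn.intervalIntegrable (ContinuousOn.div (by fun_prop) (by fun_prop) ?_)
    intro s hs'
    have := circleDistSq_pos (hs s hs') θ
    positivity

theorem integral_inv_sqrt_circleDistSq_le {a : ℝ} (ha0 : 0 ≤ a) (ha1 : a < 1) :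
    ∫ θ in (0)..(2 * π), (√(circleDistSq a θ))⁻¹ ≤ 2 * π + 2 * log (1 / (1 - a ^ 2)) := by
  set F : ℝ → ℝ → ℝ := fun θ s => (cos θ - s) / (circleDistSq s θ * √(circleDistSq s θ))
  have hs : ∀ s ∈ Icc 0 a, |s| < 1 := fun s hs => abs_lt.2 ⟨by linarith [hs.1], hs.2.trans_lt ha1⟩
  have hF : ContinuousOn (Function.uncurry F) (Icc 0 (2 * π) ×ˢ Icc 0 a) :=
    ContinuousOn.div (by fun_prop) (by fun_prop) fun p hp => by
      have := circleDistSq_pos (hs p.2 hp.2) p.1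
      positivity
  have hcont : Continuous fun θ => (√(circleDistSq a θ))⁻¹ :=
    (by fun_prop : Continuous fun θ => √(circleDistSq a θ)).inv₀ fun θ =>
      (sqrt_pos.2 (circleDistSq_pos (hs a ⟨ha0, le_rfl⟩) θ)).ne'
  have hinner : ∫ s in (0)..a, ∫ θ in (0)..(2 * π), F θ s ≤
      -2 * log (1 - a ^ 2) - -2 * log (1 - 0 ^ 2) :=
    integral_le_sub_of_hasDerivAt_of_le ha0
      (fun s hs' => hasDerivAt_neg_two_mul_log_one_sub_sq fun h => by
        obtain ⟨h1, h2⟩ := abs_lt.1 (hs s hs'); nlinarith)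
      ((continuousOn_integral_of_continuousOn_prod two_pi_pos.le ha0 hF).integrableOn_Icc)
      fun s hs' => integral_cos_sub_div_le hs'.1.le (hs'.2.trans ha1)
  calc ∫ θ in (0)..(2 * π), (√(circleDistSq a θ))⁻¹
      = 2 * π + ∫ θ in (0)..(2 * π), ∫ s in (0)..a, F θ s := by
        simp_rw [F, integral_cos_sub_div_eq_inv_sqrt_sub_one ha0 ha1]
        rw [integral_sub (hcont.intervalIntegrable _ _) intervalIntegrable_const]
        simp
    _ = 2 * π + ∫ s in (0)..a, ∫ θ in (0)..(2 * π), F θ s := by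
        rw [integral_integral_swap_of_continuousOn two_pi_pos.le ha0 hF]
    _ ≤ 2 * π + 2 * log (1 / (1 - a ^ 2)) := by
        rw [one_div, log_inv]
        norm_num at hinner
        linarith

end Real

theorem sq_norm_circleMap_sub_circleMap (ρ t θ φ : ℝ) :
    ‖circleMap 0 ρ θ - circleMap 0 t φ‖ ^ 2 = ρ ^ 2 - 2 * ρ * t * Real.cos (θ - φ) + t ^ 2 := by
  rw [← normSq_eq_norm_sq, normSq_apply]
  simp only [circleMap_zero, sub_re, sub_im, re_ofReal_mul, im_ofReal_mul, exp_ofReal_mul_I_re,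
    exp_ofReal_mul_I_im, Real.cos_sub]
  linear_combination ρ ^ 2 * Real.sin_sq_add_cos_sq θ + t ^ 2 * Real.sin_sq_add_cos_sq φ

theorem norm_circleMap_sub_eq_mul_sqrt_circleDistSq {ρ : ℝ} (hρ : 0 < ρ) (θ : ℝ) (z : ℂ) :
    ‖circleMap 0 ρ θ - z‖ = ρ * √(Real.circleDistSq (‖z‖ / ρ) (θ - arg z)) := by
  conv_lhs => rw [← norm_mul_exp_arg_mul_I z, ← circleMap_zero]
  rw [← sq_eq_sq₀ (norm_nonneg _) (by positivity), mul_pow,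
    Real.sq_sqrt (Real.circleDistSq_nonneg _ _), sq_norm_circleMap_sub_circleMap,
    Real.circleDistSq]
  field_simp

theorem integral_inv_norm_circleMap_sub_le {ρ : ℝ} {z : ℂ} (hz : ‖z‖ < ρ) :
    ∫ θ in (0)..(2 * π), ‖circleMap 0 ρ θ - z‖⁻¹ ≤
      ρ⁻¹ * (2 * π + 2 * Real.log (1 / (1 - (‖z‖ / ρ) ^ 2))) := by
  have hρ : 0 < ρ := (norm_nonneg z).trans_lt hz
  set a := ‖z‖ / ρ
  have hper : Function.Periodic (fun θ => (√(Real.circleDistSq a θ))⁻¹) (2 * π) := fun θ => by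
    simp [Real.circleDistSq]
  simp_rw [norm_circleMap_sub_eq_mul_sqrt_circleDistSq hρ, mul_inv,
    intervalIntegral.integral_const_mul]
  gcongr
  rw [intervalIntegral.integral_comp_sub_right (fun θ => (√(Real.circleDistSq a θ))⁻¹),
    zero_sub, sub_eq_neg_add, hper.intervalIntegral_add_eq (-arg z) 0, zero_add]
  exact Real.integral_inv_sqrt_circleDistSq_le (by positivity) ((div_lt_one hρ).2 hz)

theorem iteratedDeriv_div_factorial_eq_circleIntegral {f : ℂ → ℂ} {ρ : ℝ} (hρ : 0 < ρ)
    (hf : DifferentiableOn ℂ f (closedBall 0 ρ)) (j : ℕ) :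
    iteratedDeriv j f 0 / (j.factorial : ℂ) =
      (2 * π * I)⁻¹ * ∮ w in C(0, ρ), 1 / w ^ (j + 1) * f w := by
  have := hf.circleIntegral_one_div_sub_center_pow_smul hρ j
  simp only [sub_zero, smul_eq_mul] at this
  rw [this]
  field_simp

theorem sub_sum_iteratedDeriv_eq_circleIntegral {f : ℂ → ℂ} {ρ : ℝ} {z : ℂ}
    (hf : DifferentiableOn ℂ f (closedBall 0 ρ)) (hz : ‖z‖ < ρ) (k : ℕ) :
    f z - ∑ j ∈ Finset.range (k + 1), (iteratedDeriv j f 0 / (j.factorial : ℂ)) * z ^ j =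
      (2 * π * I)⁻¹ * ∮ w in C(0, ρ), (z / w) ^ (k + 1) * (w - z)⁻¹ * f w := by
  have hρ : 0 < ρ := (norm_nonneg z).trans_lt hz
  have hw0 : ∀ w ∈ sphere (0 : ℂ) ρ, w ≠ 0 := fun w hw => ne_of_mem_sphere hw hρ.ne'
  have hwz : ∀ w ∈ sphere (0 : ℂ) ρ, w ≠ z := fun w hw h => by
    rw [h, mem_sphere_zero_iff_norm] at hw; exact hz.ne hw
  have hfc : ContinuousOn f (sphere 0 ρ) := hf.continuousOn.mono sphere_subset_closedBall
  have hcauchy : f z = (2 * π * I)⁻¹ * ∮ w in C(0, ρ), (w - z)⁻¹ * f w := by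
    have := ((hf.mono closure_ball_subset_closedBall).diffContOnCl
      ).two_pi_i_inv_smul_circleIntegral_sub_inv_smul (mem_ball_zero_iff.2 hz)
    simpa only [smul_eq_mul] using this.symm
  have hkernel : EqOn (fun w => (w - z)⁻¹ * f w)
      (fun w => ∑ j ∈ Finset.range (k + 1), z ^ j * (1 / w ^ (j + 1) * f w) +
        (z / w) ^ (k + 1) * (w - z)⁻¹ * f w) (sphere 0 ρ) := fun w hw => by
    dsimp only
    conv_lhs => rw [inv_sub_eq_sum_add (hw0 w hw) (hwz w hw) k, add_mul, Finset.sum_mul]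
    congr 1
    exact Finset.sum_congr rfl fun j _ => by ring
  have htaylor : ∑ j ∈ Finset.range (k + 1), (iteratedDeriv j f 0 / (j.factorial : ℂ)) * z ^ j =
      (2 * π * I)⁻¹ * ∑ j ∈ Finset.range (k + 1),
        ∮ w in C(0, ρ), z ^ j * (1 / w ^ (j + 1) * f w) := by
    rw [Finset.mul_sum]
    refine Finset.sum_congr rfl fun j _ => ?_
    rw [iteratedDeriv_div_factorial_eq_circleIntegral hρ hf, circleIntegral.integral_const_mul]
    ring
  have hinv_pow : ∀ j : ℕ, ContinuousOn (fun w : ℂ => 1 / w ^ (j + 1)) (sphere 0 ρ) :=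
    fun j => continuousOn_const.div (continuousOn_pow _) fun w hw => pow_ne_zero _ (hw0 w hw)
  have hterm : ∀ j : ℕ, ContinuousOn (fun w => z ^ j * (1 / w ^ (j + 1) * f w)) (sphere 0 ρ) :=
    fun j => continuousOn_const.mul ((hinv_pow j).mul hfc)
  have hrem : ContinuousOn (fun w => (z / w) ^ (k + 1) * (w - z)⁻¹ * f w) (sphere 0 ρ) :=
    (((continuousOn_const.div continuousOn_id hw0).pow _).mul
      ((continuousOn_id.sub continuousOn_const).inv₀ fun w hw => sub_ne_zero.2 (hwz w hw))).mul hfc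
  rw [hcauchy, circleIntegral.integral_congr hρ.le hkernel,
    circleIntegral.integral_add
      ((continuousOn_finsetSum _ fun j _ => hterm j).circleIntegrable hρ.le)
      (hrem.circleIntegrable hρ.le),
    circleIntegral.integral_fun_sum fun j _ => (hterm j).circleIntegrable hρ.le, htaylor]
  ring

theorem norm_sub_sum_iteratedDeriv_le {f : ℂ → ℂ} {ρ M : ℝ} {z : ℂ}
    (hf : DifferentiableOn ℂ f (closedBall 0 ρ)) (hM : ∀ w ∈ sphere (0 : ℂ) ρ, ‖f w‖ ≤ M)
    (hz : ‖z‖ < ρ) (k : ℕ) :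
    ‖f z - ∑ j ∈ Finset.range (k + 1), (iteratedDeriv j f 0 / (j.factorial : ℂ)) * z ^ j‖ ≤
      (‖z‖ / ρ) ^ (k + 1) * (1 + 1 / π * Real.log (1 / (1 - (‖z‖ / ρ) ^ 2))) * M := by
  have hρ : 0 < ρ := (norm_nonneg z).trans_lt hz
  have hM0 : 0 ≤ M := (norm_nonneg _).trans (hM ρ (by simp [hρ.le]))
  set C := (‖z‖ / ρ) ^ (k + 1) * M
  have hγz : ∀ θ, circleMap 0 ρ θ - z ≠ 0 := fun θ h => by
    have := norm_circleMap_zero ρ θ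
    rw [sub_eq_zero.1 h, abs_of_pos hρ] at this
    exact hz.ne this
  have hbound : ∀ θ, ‖(z / circleMap 0 ρ θ) ^ (k + 1) * (circleMap 0 ρ θ - z)⁻¹ *
      f (circleMap 0 ρ θ)‖ ≤ C * ‖circleMap 0 ρ θ - z‖⁻¹ := fun θ => by
    rw [norm_mul, norm_mul, norm_pow, norm_div, norm_inv, norm_circleMap_zero, abs_of_pos hρ]
    have := hM _ (circleMap_mem_sphere 0 hρ.le θ)
    calc _ = (‖z‖ / ρ) ^ (k + 1) * ‖circleMap 0 ρ θ - z‖⁻¹ * ‖f (circleMap 0 ρ θ)‖ := rfl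
      _ ≤ (‖z‖ / ρ) ^ (k + 1) * ‖circleMap 0 ρ θ - z‖⁻¹ * M := by gcongr
      _ = C * ‖circleMap 0 ρ θ - z‖⁻¹ := by ring
  have hint : IntervalIntegrable (fun θ => C * ‖circleMap 0 ρ θ - z‖⁻¹) volume 0 (2 * π) :=
    (continuous_const.mul (((continuous_circleMap 0 ρ).sub continuous_const).norm.inv₀
      fun θ => norm_ne_zero_iff.2 (hγz θ))).intervalIntegrable _ _
  rw [sub_sum_iteratedDeriv_eq_circleIntegral hf hz, norm_mul]
  calc _ ≤ ‖(2 * π * I)⁻¹‖ * (ρ * ∫ θ in (0)..(2 * π), C * ‖circleMap 0 ρ θ - z‖⁻¹) := by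
        gcongr
        exact circleIntegral.norm_integral_le_of_norm_le hρ.le hint hbound
    _ ≤ (2 * π)⁻¹ * (ρ * (C * (ρ⁻¹ * (2 * π + 2 * Real.log (1 / (1 - (‖z‖ / ρ) ^ 2)))))) := by
        rw [intervalIntegral.integral_const_mul]
        have : ‖(2 * π * I)⁻¹‖ = (2 * π)⁻¹ := by simp [Real.pi_pos.le]
        rw [this]
        gcongr
        exact integral_inv_norm_circleMap_sub_le hz
    _ = _ := by
        simp only [C]
        field_simp

theorem taylor_remainder_bound (f : ℂ → ℂ)
    (hf : DifferentiableOn ℂ f (Metric.ball 0 1)) (M : ℝ)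
    (hM : ∀ w ∈ Metric.ball (0 : ℂ) 1, ‖f w‖ ≤ M) (k : ℕ) (z : ℂ) (hz : ‖z‖ < 1) :
    ‖f z - ∑ j ∈ Finset.range (k + 1), (iteratedDeriv j f 0 / (j.factorial : ℂ)) * z ^ j‖ ≤
      ‖z‖ ^ (k + 1) * (1 + (1 / Real.pi) * Real.log (1 / (1 - ‖z‖ ^ 2))) * M := by
  set Φ : ℝ → ℝ := fun ρ =>
    (‖z‖ / ρ) ^ (k + 1) * (1 + 1 / π * Real.log (1 / (1 - (‖z‖ / ρ) ^ 2))) * M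
  have hΦ : ContinuousAt Φ 1 := by
    have : 1 - (‖z‖ / 1) ^ 2 ≠ 0 := by nlinarith [norm_nonneg z]
    fun_prop (disch := first | exact one_ne_zero | simpa using this)
  have hle : ∀ ρ ∈ Ioo ‖z‖ 1, ‖f z - ∑ j ∈ Finset.range (k + 1),
      (iteratedDeriv j f 0 / (j.factorial : ℂ)) * z ^ j‖ ≤ Φ ρ := fun ρ hρ =>
    norm_sub_sum_iteratedDeriv_le (hf.mono (closedBall_subset_ball hρ.2))
      (fun w hw => hM w (closedBall_subset_ball hρ.2 (sphere_subset_closedBall hw))) hρ.1 k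
  simpa [Φ] using ge_of_tendsto (hΦ.mono_left nhdsWithin_le_nhds)
    (eventually_of_mem (Ioo_mem_nhdsLT hz) hle)
end

section
/- Let H : ℂ → ℝ be harmonic on all of ℂ, and suppose there exist a real constant c and constants C, R > 0 such that |H(w) − c log|w|²| ≤ C/|w| for all |w| ≥ R. Then c = 0 and H ≡ 0. -/
/-!
The hypotheses make `H` harmonic on `ℂ`. According to the sign of `c`, the term `c log |w|²`
is eventually `≤ 0` or `≥ 0`, so `H` or `-H` is bounded above. A harmonic function on `ℂ`
that is bounded above is constant: it is `Re F` with `F` entire, and `exp ∘ F` is then a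
bounded entire function. Once `H` is a constant `a`, the estimate says
`a - c log r² → 0` as `r → ∞`, which forces `c = 0` and then `a = 0`.
-/

open Complex InnerProductSpace Metric Set Filter Topology

lemma fderiv_fderiv_apply_eq_iteratedFDeriv {E F : Type*} [NormedAddCommGroup E]
    [NormedSpace ℝ E] [NormedAddCommGroup F] [NormedSpace ℝ F] {f : E → F} {x : E}
    (hf : ContDiffAt ℝ 2 f x) (u v : E) :
    fderiv ℝ (fun y => fderiv ℝ f y u) x v = iteratedFDeriv ℝ 2 f x ![v, u] := by
  have hdf : DifferentiableAt ℝ (fderiv ℝ f) x :=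
    (hf.fderiv_right (m := 1) (by norm_num)).differentiableAt one_ne_zero
  rw [fderiv_clm_apply hdf (differentiableAt_const u), iteratedFDeriv_two_apply]
  simp

theorem harmonicOnNhd_of_fderiv_fderiv_add {H : ℂ → ℝ} (hH : ContDiff ℝ 2 H)
    (hharm : ∀ z : ℂ, fderiv ℝ (fun w => fderiv ℝ H w 1) z 1 +
        fderiv ℝ (fun w => fderiv ℝ H w I) z I = 0) :
    HarmonicOnNhd H univ := by
  refine fun _ _ => ⟨hH.contDiffAt, Eventually.of_forall fun z => ?_⟩
  rw [laplacian_eq_iteratedFDeriv_complexPlane, Pi.zero_apply]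
  dsimp only
  rw [← fderiv_fderiv_apply_eq_iteratedFDeriv hH.contDiffAt,
    ← fderiv_fderiv_apply_eq_iteratedFDeriv hH.contDiffAt]
  exact hharm z

theorem InnerProductSpace.HarmonicOnNhd.eq_of_bddAbove {f : ℂ → ℝ}
    (hf : HarmonicOnNhd f univ) (hb : BddAbove (range f)) (z w : ℂ) : f z = f w := by
  obtain ⟨F, hF, rfl⟩ := hf.exists_analyticOnNhd_univ_re_eq
  obtain ⟨M, hM⟩ := hb
  have hexp : Differentiable ℂ (fun z => exp (F z)) :=
    fun z => (hF z (mem_univ z)).differentiableAt.cexp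
  have hbdd : Bornology.IsBounded (range fun z => exp (F z)) := by
    refine isBounded_iff_forall_norm_le.2 ⟨Real.exp M, ?_⟩
    rintro _ ⟨z, rfl⟩
    rw [norm_exp]
    exact Real.exp_le_exp.2 (hM ⟨z, rfl⟩)
  simpa [norm_exp] using congrArg norm (hexp.apply_eq_apply_of_bounded hbdd z w)

theorem bddAbove_range_of_abs_sub_mul_log_le {H : ℂ → ℝ} (hH : Continuous H) {c C R : ℝ}
    (hc : c ≤ 0) (hbd : ∀ w : ℂ, R ≤ ‖w‖ → |H w - c * Real.log (‖w‖ ^ 2)| ≤ C / ‖w‖) :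
    BddAbove (range H) := by
  obtain ⟨M, hM⟩ := (isCompact_closedBall (0 : ℂ) (max R 1)).bddAbove_image hH.continuousOn
  refine ⟨max M |C|, ?_⟩
  rintro _ ⟨w, rfl⟩
  rcases le_or_gt ‖w‖ (max R 1) with hw | hw
  · exact le_max_of_le_left (hM ⟨w, mem_closedBall_zero_iff.2 hw, rfl⟩)
  · have hw1 : 1 ≤ ‖w‖ := (le_max_right R 1).trans hw.le
    have hlog : c * Real.log (‖w‖ ^ 2) ≤ 0 :=
      mul_nonpos_of_nonpos_of_nonneg hc (Real.log_nonneg (one_le_pow₀ hw1))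
    have hC : C / ‖w‖ ≤ |C| :=
      (div_le_div_of_nonneg_right (le_abs_self C) (norm_nonneg w)).trans
        (div_le_self (abs_nonneg C) hw1)
    have hH := (abs_le.1 (hbd w ((le_max_left R 1).trans hw.le))).2
    exact le_max_of_le_right (by linarith)

theorem eq_zero_of_tendsto_sub_mul_log {a c : ℝ}
    (h : Tendsto (fun r : ℝ => a - c * Real.log (r ^ 2)) atTop (𝓝 0)) : c = 0 ∧ a = 0 := by
  have hc : c = 0 := by
    by_contra hc
    have hlog : Tendsto (fun r : ℝ => Real.log (r ^ 2)) atTop atTop :=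
      Real.tendsto_log_atTop.comp (tendsto_pow_atTop two_ne_zero)
    have hlim : Tendsto (fun r : ℝ => Real.log (r ^ 2)) atTop (𝓝 (a / c)) := by
      convert ((tendsto_const_nhds (x := a)).sub h).div_const c using 1
      · funext r
        field_simp
        ring
      · simp
    exact not_tendsto_nhds_of_tendsto_atTop hlog _ hlim
  subst hc
  simp only [zero_mul, sub_zero] at h
  exact ⟨rfl, tendsto_nhds_unique tendsto_const_nhds h⟩

theorem harmonic_liouville_general (H : ℂ → ℝ) (hH : ContDiff ℝ 2 H)
    (hharm : ∀ z : ℂ,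
      fderiv ℝ (fun w => fderiv ℝ H w 1) z 1 +
        fderiv ℝ (fun w => fderiv ℝ H w Complex.I) z Complex.I = 0)
    (c C R : ℝ)
    (hbd : ∀ w : ℂ, R ≤ ‖w‖ → |H w - c * Real.log (‖w‖ ^ 2)| ≤ C / ‖w‖) :
    c = 0 ∧ ∀ w, H w = 0 := by
  have hharmonic := harmonicOnNhd_of_fderiv_fderiv_add hH hharm
  have hconst : ∀ w, H w = H 0 := by
    rcases le_total c 0 with hc | hc
    · exact fun w => hharmonic.eq_of_bddAbove
        (bddAbove_range_of_abs_sub_mul_log_le hH.continuous hc hbd) w 0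
    · have hbd' : ∀ w : ℂ, R ≤ ‖w‖ → |(-H) w - -c * Real.log (‖w‖ ^ 2)| ≤ C / ‖w‖ := by
        intro w hw
        rw [Pi.neg_apply, ← abs_neg]
        convert hbd w hw using 2
        ring
      exact fun w => neg_inj.1 (hharmonic.neg.eq_of_bddAbove
        (bddAbove_range_of_abs_sub_mul_log_le hH.continuous.neg (neg_nonpos.2 hc) hbd') w 0)
  have htend : Tendsto (fun r : ℝ => H 0 - c * Real.log (r ^ 2)) atTop (𝓝 0) := by
    refine squeeze_zero_norm' ?_ ((tendsto_const_nhds (x := C)).div_atTop tendsto_id)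
    filter_upwards [eventually_ge_atTop (max R 0)] with r hr
    have hr0 : 0 ≤ r := (le_max_right R 0).trans hr
    simpa [hconst r, norm_real, Real.norm_of_nonneg hr0] using
      hbd r (by rw [norm_real, Real.norm_of_nonneg hr0]; exact (le_max_left R 0).trans hr)
  obtain ⟨rfl, hH0⟩ := eq_zero_of_tendsto_sub_mul_log htend
  exact ⟨rfl, fun w => (hconst w).trans hH0⟩

theorem harmonic_liouville (H : ℂ → ℝ) (hH : ContDiff ℝ 2 H)
    (hharm : ∀ z : ℂ,
      fderiv ℝ (fun w => fderiv ℝ H w 1) z 1 +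
        fderiv ℝ (fun w => fderiv ℝ H w Complex.I) z Complex.I = 0)
    (c C R : ℝ) (hC : 0 < C) (hR : 0 < R)
    (hbd : ∀ w : ℂ, R ≤ ‖w‖ → |H w - c * Real.log (‖w‖ ^ 2)| ≤ C / ‖w‖) :
    c = 0 ∧ ∀ w, H w = 0 :=
  harmonic_liouville_general H hH hharm c C R hbd
end

section
/- Let w : ℂ → [0,∞) be continuous with ∫_ℂ (1+|ξ|)^{n} w(ξ) dA(ξ) < ∞, let π be a polynomial, and suppose Φ : ℂ → ℂ is continuously differentiable with ∂̄Φ = conj(π) · w on ℂ and Φ(z) = O(|z|^{-n-1}) as |z| → ∞. Then ∫_ℂ q(ξ) conj(π(ξ)) w(ξ) dA(ξ) = 0 for every polynomial q of degree at most n−1. -/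
/-!
Put `f = q Φ`. As `q` is holomorphic, `∂̄f = q · conj p · w`, and as `deg q < n` the decay of `Φ`
gives `f = o(1/|z|)`. Green's theorem on the square `[-k, k]²` turns `2i ∫ ∂̄f` over the square into
the integral of `f` over its boundary, of length `8k`, on which `|f| = o(1/k)`; letting the squares
exhaust the plane gives `∫ ∂̄f = 0`.
-/

open MeasureTheory

/-- Normalized planar area measure: the unit disk has unit area. -/
noncomputable def dA : Measure ℂ := (ENNReal.ofReal Real.pi)⁻¹ • volume

open Set Complex Filter Bornology Asymptotics Topology

noncomputable def dbar (f : ℂ → ℂ) (z : ℂ) : ℂ :=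
  (fderiv ℝ f z 1 + I * fderiv ℝ f z I) / 2

theorem two_mul_I_mul_dbar (f : ℂ → ℂ) (z : ℂ) :
    2 * I * dbar f z = I • fderiv ℝ f z 1 - fderiv ℝ f z I := by
  rw [dbar, smul_eq_mul]
  linear_combination (fderiv ℝ f z I) * I_sq

theorem dbar_mul_of_differentiableAt {g f : ℂ → ℂ} {z : ℂ} (hg : DifferentiableAt ℂ g z)
    (hf : DifferentiableAt ℝ f z) : dbar (fun z => g z * f z) z = g z * dbar f z := by
  have hgf := (hg.hasDerivAt.hasFDerivAt.restrictScalars ℝ).mul hf.hasFDerivAt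
  rw [dbar, dbar, show (fun z => g z * f z) = g * f from rfl, hgf.fderiv]
  simp only [add_apply, smul_apply, smul_eq_mul, ContinuousLinearMap.coe_restrictScalars',
    ContinuousLinearMap.toSpanSingleton_apply, one_mul]
  linear_combination (f z * deriv g z / 2) * I_sq

def centeredSquare (k : ℝ) : Set ℂ := Icc (-k) k ×ℂ Icc (-k) k

theorem setIntegral_reProdIm_Icc {E : Type*} [NormedAddCommGroup E] [NormedSpace ℝ E]
    {g : ℂ → E} {a b c d : ℝ} (hab : a ≤ b) (hcd : c ≤ d)
    (hg : IntegrableOn g (Icc a b ×ℂ Icc c d)) :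
    ∫ z in Icc a b ×ℂ Icc c d, g z = ∫ x in a..b, ∫ y in c..d, g (x + y * I) := by
  have e := volume_preserving_equiv_real_prod.symm
  have hemb := measurableEquivRealProd.symm.measurableEmbedding
  have hpre : measurableEquivRealProd.symm ⁻¹' (Icc a b ×ℂ Icc c d) = Icc a b ×ˢ Icc c d := rfl
  have hg' : IntegrableOn (fun p => g (measurableEquivRealProd.symm p)) (Icc a b ×ˢ Icc c d) := by
    rw [← hpre]; exact (e.integrableOn_comp_preimage hemb).mpr hg
  rw [← e.setIntegral_preimage_emb hemb, hpre, Measure.volume_eq_prod,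
    setIntegral_prod _ (by rw [← Measure.volume_eq_prod]; exact hg'),
    intervalIntegral.integral_of_le hab, ← integral_Icc_eq_integral_Ioc]
  refine setIntegral_congr_fun measurableSet_Icc fun x _ => ?_
  rw [intervalIntegral.integral_of_le hcd, ← integral_Icc_eq_integral_Ioc]
  simp [measurableEquivRealProd_symm_apply, mk_eq_add_mul_I]

theorem tendsto_setIntegral_centeredSquare {E : Type*} [NormedAddCommGroup E] [NormedSpace ℝ E]
    {g : ℂ → E} (hg : Integrable g) :
    Tendsto (fun k : ℕ => ∫ z in centeredSquare k, g z) atTop (𝓝 (∫ z, g z)) := by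
  refine AECover.integral_tendsto_of_countably_generated ?_ hg
  refine ⟨ae_of_all _ fun z => ?_, fun k => (isClosed_Icc.reProdIm isClosed_Icc).measurableSet⟩
  filter_upwards [eventually_ge_atTop ⌈max |z.re| |z.im|⌉₊] with k hk
  have hk' : max |z.re| |z.im| ≤ k := (Nat.le_ceil _).trans (Nat.cast_le.mpr hk)
  rw [max_le_iff, abs_le, abs_le] at hk'
  exact ⟨hk'.1, hk'.2⟩

theorem norm_setIntegral_dbar_centeredSquare_le {f : ℂ → ℂ} {k M : ℝ} (hk : 0 ≤ k)
    (hf : DifferentiableOn ℝ f (centeredSquare k))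
    (hint : IntegrableOn (dbar f) (centeredSquare k))
    (hM : ∀ z, k ≤ ‖z‖ → ‖f z‖ ≤ M) :
    ‖∫ z in centeredSquare k, dbar f z‖ ≤ 4 * k * M := by
  have hkk : -k ≤ k := by linarith
  have hside : ∀ φ : ℝ → ℂ, (∀ x, k ≤ ‖φ x‖) → ‖∫ x in -k..k, f (φ x)‖ ≤ M * (2 * k) := by
    intro φ hφ
    have h := intervalIntegral.norm_integral_le_of_norm_le_const (a := -k) (b := k)
      fun x _ => hM _ (hφ x)
    rwa [sub_neg_eq_add, abs_of_nonneg (by linarith), ← two_mul] at h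
  have hre : ∀ x y : ℝ, |x| = k → k ≤ ‖(x + y * I : ℂ)‖ := fun x y hx =>
    hx ▸ (by simpa using abs_re_le_norm (x + y * I))
  have him : ∀ x y : ℝ, |y| = k → k ≤ ‖(x + y * I : ℂ)‖ := fun x y hy =>
    hy ▸ (by simpa using abs_im_le_norm (x + y * I))
  unfold centeredSquare at hf hint ⊢
  have hboundary := integral_boundary_rect_of_differentiableOn_real f ⟨-k, -k⟩ ⟨k, k⟩
    (by rwa [uIcc_of_le hkk])
    (by simp_rw [uIcc_of_le hkk, ← two_mul_I_mul_dbar]; exact hint.const_mul (2 * I))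
  simp only [← two_mul_I_mul_dbar, intervalIntegral.integral_const_mul] at hboundary
  rw [← setIntegral_reProdIm_Icc hkk hkk hint] at hboundary
  have hk' : |-k| = k := by rw [abs_neg, abs_of_nonneg hk]
  have hbottom := hside _ fun x => him x (-k) hk'
  have htop := hside _ fun x => him x k (abs_of_nonneg hk)
  have hright := hside _ fun y => hre k y (abs_of_nonneg hk)
  have hleft := hside _ fun y => hre (-k) y hk'
  have h2 : ‖2 * I * ∫ z in Icc (-k) k ×ℂ Icc (-k) k, dbar f z‖ ≤ 4 * (M * (2 * k)) := by
    rw [← hboundary]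
    refine ((norm_sub_le _ _).trans (add_le_add ((norm_add_le _ _).trans
      (add_le_add (norm_sub_le _ _) le_rfl)) le_rfl)).trans ?_
    simp only [norm_smul, norm_I, one_mul]
    linarith
  rw [norm_mul, norm_mul, Complex.norm_two, norm_I, mul_one] at h2
  linarith

theorem integral_dbar_eq_zero_of_isLittleO {f : ℂ → ℂ} (hf : Differentiable ℝ f)
    (hint : Integrable (dbar f)) (hdecay : f =o[cobounded ℂ] (·⁻¹)) :
    ∫ z, dbar f z = 0 := by
  refine tendsto_nhds_unique (tendsto_setIntegral_centeredSquare hint) ?_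
  rw [Metric.tendsto_atTop]
  intro ε hε
  obtain ⟨r, -, hr⟩ :=
    hasBasis_cobounded_norm.eventually_iff.1 (hdecay.def (by positivity : 0 < ε / 8))
  refine ⟨⌈max r 1⌉₊, fun k hk => ?_⟩
  have hrk : max r 1 ≤ k := (Nat.le_ceil _).trans (Nat.cast_le.mpr hk)
  have hk0 : (0 : ℝ) < k := by linarith [le_max_right r 1]
  have hM : ∀ z, (k : ℝ) ≤ ‖z‖ → ‖f z‖ ≤ ε / 8 / k := fun z hz => by
    have hz := hr (x := z) ((le_max_left r 1).trans (hrk.trans hz))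
    rw [norm_inv] at hz
    calc ‖f z‖ ≤ ε / 8 * ‖z‖⁻¹ := hz
      _ ≤ ε / 8 / k := by rw [div_eq_mul_inv (ε / 8)]; gcongr
  rw [dist_zero_right]
  calc ‖∫ z in centeredSquare k, dbar f z‖ ≤ 4 * k * (ε / 8 / k) :=
        norm_setIntegral_dbar_centeredSquare_le hk0.le hf.differentiableOn hint.integrableOn hM
    _ < ε := by field_simp; linarith

theorem Polynomial.isLittleO_eval_mul_inv {𝕜 : Type*} [NormedField 𝕜] {q : Polynomial 𝕜} {n : ℕ}
    (hq : q.degree < n) {g : 𝕜 → 𝕜} (hg : g =O[cobounded 𝕜] fun z => (z ^ (n + 1))⁻¹) :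
    (fun z => q.eval z * g z) =o[cobounded 𝕜] (·⁻¹) := by
  have hqn : (fun z => q.eval z) =o[cobounded 𝕜] (· ^ n) := by
    simpa using Polynomial.isLittleO_cobounded_of_degree_lt (P := q) (Q := Polynomial.X ^ n)
      (by rwa [Polynomial.degree_X_pow (R := 𝕜)])
  refine (hqn.mul_isBigO hg).congr_right fun z => ?_
  rcases eq_or_ne z 0 with rfl | hz
  · simp
  · field_simp
    ring

theorem orthogonality_from_dbar_general (n : ℕ) (w : ℂ → ℝ)
    (p : Polynomial ℂ) (Φ : ℂ → ℂ) (hΦ : ContDiff ℝ 1 Φ)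
    (hdbar : ∀ z : ℂ,
      (fderiv ℝ Φ z 1 + Complex.I * fderiv ℝ Φ z Complex.I) / 2 =
        (starRingEnd ℂ) (p.eval z) * (w z : ℂ))
    (C R : ℝ) (hdecay : ∀ z : ℂ, R ≤ ‖z‖ → ‖Φ z‖ ≤ C / ‖z‖ ^ (n + 1)) :
    ∀ q : Polynomial ℂ, q.degree < n →
      ∫ ξ, q.eval ξ * (starRingEnd ℂ) (p.eval ξ) * (w ξ : ℂ) ∂dA = 0 := by
  intro q hq
  have hΦd : Differentiable ℝ Φ := hΦ.differentiable one_ne_zero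
  have hqΦ : dbar (fun z => q.eval z * Φ z) =
      fun ξ => q.eval ξ * (starRingEnd ℂ) (p.eval ξ) * (w ξ : ℂ) := funext fun z => by
    rw [dbar_mul_of_differentiableAt q.differentiableAt (hΦd z), mul_assoc, ← hdbar z, dbar]
  have hΦO : Φ =O[cobounded ℂ] fun z => (z ^ (n + 1))⁻¹ :=
    IsBigO.of_bound C (hasBasis_cobounded_norm.eventually_iff.2 ⟨R, trivial, fun z hz => by
      simpa [div_eq_mul_inv] using hdecay z hz⟩)
  rw [dA, integral_smul_measure, ← hqΦ]
  by_cases hint : Integrable (dbar fun z => q.eval z * Φ z)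
  · rw [integral_dbar_eq_zero_of_isLittleO (f := fun z => q.eval z * Φ z)
      ((q.differentiable.restrictScalars ℝ).mul hΦd) hint (q.isLittleO_eval_mul_inv hq hΦO),
      smul_zero]
  · -- the Bochner integral of a non-integrable function is `0`
    rw [integral_undef hint, smul_zero]

theorem orthogonality_from_dbar (n : ℕ) (w : ℂ → ℝ) (hwc : Continuous w)
    (hw0 : ∀ ξ, 0 ≤ w ξ)
    (hmom : Integrable (fun ξ => (1 + ‖ξ‖) ^ n * w ξ) dA)
    (p : Polynomial ℂ) (Φ : ℂ → ℂ) (hΦ : ContDiff ℝ 1 Φ)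
    (hdbar : ∀ z : ℂ,
      (fderiv ℝ Φ z 1 + Complex.I * fderiv ℝ Φ z Complex.I) / 2 =
        (starRingEnd ℂ) (p.eval z) * (w z : ℂ))
    (C R : ℝ) (hdecay : ∀ z : ℂ, R ≤ ‖z‖ → ‖Φ z‖ ≤ C / ‖z‖ ^ (n + 1)) :
    ∀ q : Polynomial ℂ, q.degree < n →
      ∫ ξ, q.eval ξ * (starRingEnd ℂ) (p.eval ξ) * (w ξ : ℂ) ∂dA = 0 :=
  orthogonality_from_dbar_general n w p Φ hΦ hdbar C R hdecay
end
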